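/- The Thue–Morse sequence never has three equal consecutive terms: let t : ℕ → ℕ be defined by t(n) = (number of 1 digits in the binary expansion of n) mod 2. Then there is no n ∈ ℕ with t(n) = t(n+1) and t(n+1) = t(n+2). (Equivalently, the binary expansion of the Thué–Morse constant τ = Σ_{n≥0} t(n)·2^{−(n+1)} never contains three 0's in a row or three 1's in a row.) -/
import Mathlib

lemma tm_even_ne (m : ℕ) :
    (Nat.digits 2 (2 * m)).count 1 % 2 ≠ (Nat.digits 2 (2 * m + 1)).count 1 % 2 := by
  rcases Nat.eq_zero_or_pos m with rfl | hm
  · simp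
  · have h1 : Nat.digits 2 (2 * m) = 0 :: Nat.digits 2 m := by
      rw [Nat.digits_def' (by norm_num) (by omega)]
      congr 1
      · omega
      · congr 1; omega
    have h2 : Nat.digits 2 (2 * m + 1) = 1 :: Nat.digits 2 m := by
      rw [Nat.digits_def' (by norm_num) (by omega)]
      congr 1
      · omega
      · congr 1; omega
    rw [h1, h2]
    simp [List.count_cons]
    omega

/-- The Thue–Morse sequence t(n) = (number of 1 bits of n) mod 2 never has three
equal consecutive terms. -/
theorem thue_morse_no_three_in_a_row (t : ℕ → ℕ)
    (ht : ∀ n, t n = (Nat.digits 2 n).count 1 % 2) :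
    ¬ ∃ n : ℕ, t n = t (n + 1) ∧ t (n + 1) = t (n + 2) := by
  rintro ⟨n, h1, h2⟩
  rcases Nat.even_or_odd n with ⟨m, rfl⟩ | ⟨m, rfl⟩
  · have e1 : m + m = 2 * m := by ring
    have e2 : m + m + 1 = 2 * m + 1 := by ring
    rw [e1, ht, ht] at h1
    exact tm_even_ne m h1
  · have e1 : 2 * m + 1 + 1 = 2 * (m + 1) := by ring
    have e2 : 2 * m + 1 + 2 = 2 * (m + 1) + 1 := by ring
    rw [e1, e2, ht, ht] at h2
    exact tm_even_ne (m + 1) h2
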